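/- For a probability density p on ℝ^d and nonnegative measurable functions F, ζ with ∫ζ = 1 and ζ > 0 a.e., one has (1/2)·∫ p(y)F(y)/ζ(y)^{2/d} dy ≥ (1/2)·(∫ (p(y)F(y))^{d/(d+2)} dy)^{(d+2)/d}, with equality when ζ(y) = (p(y)F(y))^{d/(d+2)} / ∫ (p(s)F(s))^{d/(d+2)} ds (assuming the normalizing integral is finite and positive). -/

import Mathlib

open MeasureTheory ENNReal

/-! With `r = 2/d`, split `(pF)^{1/(1+r)} = (pF/ζ^r)^{1/(1+r)} · ζ^{r/(1+r)}` and apply Hölder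
with the conjugate exponents `1 + r` and `(1 + r)/r`: the second factor integrates to
`(∫ ζ)^{r/(1+r)} = 1`, so `∫ (pF)^{1/(1+r)} ≤ (∫ pF/ζ^r)^{1/(1+r)}`. For
`ζ = (pF)^{1/(1+r)} / I` with `I = ∫ (pF)^{1/(1+r)}` one has pointwise
`pF/ζ^r = (pF)^{1/(1+r)} · I^r`, and integrating gives `I^{1+r}`. -/

theorem ENNReal.rpow_eq_div_rpow_rpow_mul_rpow (x : ℝ≥0∞) {z : ℝ≥0∞} (hz0 : z ≠ 0) (hzt : z ≠ ⊤)
    {a : ℝ} (ha : 0 ≤ a) (r : ℝ) : x ^ a = (x / z ^ r) ^ a * z ^ (r * a) := by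
  rw [div_rpow_of_nonneg _ _ ha, ← rpow_mul,
    ENNReal.div_mul_cancel (rpow_pos (pos_iff_ne_zero.2 hz0) hzt).ne'
      (rpow_ne_top_of_ne_zero hz0 hzt)]

theorem ENNReal.div_rpow_div_rpow_inv_one_add {x : ℝ≥0∞} (hx : x ≠ ⊤) (I : ℝ≥0∞) {r : ℝ}
    (hr : 0 ≤ r) :
    x / (x ^ (1 + r)⁻¹ / I) ^ r = x ^ (1 + r)⁻¹ * I ^ r := by
  have ha : 0 < (1 + r)⁻¹ := by positivity
  rcases eq_or_ne x 0 with rfl | hx0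
  · simp [zero_rpow_of_pos ha]
  set t := x ^ (1 + r)⁻¹
  have ht0 : t ≠ 0 := (rpow_pos (pos_iff_ne_zero.2 hx0) hx).ne'
  have htt : t ≠ ⊤ := rpow_ne_top_of_nonneg ha.le hx
  have hx_eq : x = t * t ^ r :=
    calc x = t ^ (1 + r) := (rpow_inv_rpow (by positivity) x).symm
      _ = t * t ^ r := by rw [rpow_add _ _ ht0 htt, rpow_one]
  rw [div_rpow_of_nonneg _ _ hr, hx_eq, mul_div_assoc,
    ENNReal.div_div_cancel (rpow_pos (pos_iff_ne_zero.2 ht0) htt).ne'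
      (rpow_ne_top_of_ne_zero ht0 htt)]

section

variable {α : Type*} [MeasurableSpace α] {μ : Measure α}

theorem lintegral_rpow_inv_one_add_rpow_le_lintegral_div_rpow {g ζ : α → ℝ≥0∞}
    (hg : AEMeasurable g μ) (hζ : AEMeasurable ζ μ) (hζ1 : ∫⁻ y, ζ y ∂μ = 1)
    (hζpos : ∀ᵐ y ∂μ, 0 < ζ y) {r : ℝ} (hr : 0 < r) :
    (∫⁻ y, g y ^ (1 + r)⁻¹ ∂μ) ^ (1 + r) ≤ ∫⁻ y, g y / ζ y ^ r ∂μ := by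
  set a : ℝ := (1 + r)⁻¹
  have ha : 0 < a := by positivity
  have hHolder : Real.HolderConjugate (1 + r) ((1 + r) / r) := by
    rw [Real.holderConjugate_iff]
    exact ⟨by linarith, by field_simp⟩
  have hζfin : ∀ᵐ y ∂μ, ζ y < ⊤ := ae_lt_top' hζ (by simp [hζ1])
  have hsplit : ∀ᵐ y ∂μ, g y ^ a = (g y / ζ y ^ r) ^ a * ζ y ^ (r * a) := by
    filter_upwards [hζpos, hζfin] with y h0 ht
    exact rpow_eq_div_rpow_rpow_mul_rpow _ h0.ne' ht.ne ha.le r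
  have hζexp : r * a * ((1 + r) / r) = 1 := by simp only [a]; field_simp
  calc (∫⁻ y, g y ^ a ∂μ) ^ (1 + r)
      = (∫⁻ y, ((fun y => (g y / ζ y ^ r) ^ a) * fun y => ζ y ^ (r * a)) y ∂μ) ^ (1 + r) := by
        rw [lintegral_congr_ae hsplit]; rfl
    _ ≤ ((∫⁻ y, ((g y / ζ y ^ r) ^ a) ^ (1 + r) ∂μ) ^ (1 / (1 + r))
          * (∫⁻ y, (ζ y ^ (r * a)) ^ ((1 + r) / r) ∂μ) ^ (1 / ((1 + r) / r))) ^ (1 + r) := by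
        gcongr
        exact ENNReal.lintegral_mul_le_Lp_mul_Lq μ hHolder ((hg.div (hζ.pow_const r)).pow_const a)
          (hζ.pow_const _)
    _ = ∫⁻ y, g y / ζ y ^ r ∂μ := by
        simp only [a, rpow_inv_rpow (by positivity : (1 + r) ≠ 0), ← rpow_mul, hζexp, rpow_one,
          hζ1, one_rpow, mul_one, one_div]

theorem lintegral_div_rpow_normalized_eq {g : α → ℝ≥0∞} (hg : AEMeasurable g μ) {r : ℝ}
    (hr : 0 ≤ r)
    (hI0 : ∫⁻ y, g y ^ (1 + r)⁻¹ ∂μ ≠ 0) (hIt : ∫⁻ y, g y ^ (1 + r)⁻¹ ∂μ ≠ ⊤) :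
    ∫⁻ y, g y / (g y ^ (1 + r)⁻¹ / ∫⁻ s, g s ^ (1 + r)⁻¹ ∂μ) ^ r ∂μ
      = (∫⁻ y, g y ^ (1 + r)⁻¹ ∂μ) ^ (1 + r) := by
  have hga : AEMeasurable (fun y => g y ^ (1 + r)⁻¹) μ := hg.pow_const _
  have hgfin : ∀ᵐ y ∂μ, g y < ⊤ := by
    filter_upwards [ae_lt_top' hga hIt] with y hy
    exact (rpow_lt_top_iff_of_pos (by positivity)).1 hy
  calc ∫⁻ y, g y / (g y ^ (1 + r)⁻¹ / ∫⁻ s, g s ^ (1 + r)⁻¹ ∂μ) ^ r ∂μ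
      = ∫⁻ y, g y ^ (1 + r)⁻¹ * (∫⁻ s, g s ^ (1 + r)⁻¹ ∂μ) ^ r ∂μ := by
        refine lintegral_congr_ae ?_
        filter_upwards [hgfin] with y hy
        exact div_rpow_div_rpow_inv_one_add hy.ne _ hr
    _ = (∫⁻ y, g y ^ (1 + r)⁻¹ ∂μ) ^ (1 + r) := by
        rw [lintegral_mul_const'' _ hga, rpow_add _ _ hI0 hIt, rpow_one]

end

theorem optimal_point_density_vector_general
    {d : ℕ} (hd : 1 ≤ d)
    (μ : Measure (EuclideanSpace ℝ (Fin d)))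
    (p F ζ : EuclideanSpace ℝ (Fin d) → ENNReal)
    (hp : Measurable p) (hF : Measurable F) (hζ : Measurable ζ)
    (hζ1 : ∫⁻ y, ζ y ∂μ = 1)
    (hζpos : ∀ᵐ y ∂μ, 0 < ζ y) :
    (1 / 2 : ENNReal) * (∫⁻ y, (p y * F y) / (ζ y) ^ ((2 : ℝ) / d) ∂μ)
      ≥ (1 / 2) * (∫⁻ y, (p y * F y) ^ ((d : ℝ) / (d + 2)) ∂μ) ^ (((d : ℝ) + 2) / d)
    ∧ ((0 < ∫⁻ y, (p y * F y) ^ ((d : ℝ) / (d + 2)) ∂μ) →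
       (∫⁻ y, (p y * F y) ^ ((d : ℝ) / (d + 2)) ∂μ < ⊤) →
       (ζ = fun y => (p y * F y) ^ ((d : ℝ) / (d + 2))
              / ∫⁻ s, (p s * F s) ^ ((d : ℝ) / (d + 2)) ∂μ) →
       (1 / 2 : ENNReal) * (∫⁻ y, (p y * F y) / (ζ y) ^ ((2 : ℝ) / d) ∂μ)
         = (1 / 2) * (∫⁻ y, (p y * F y) ^ ((d : ℝ) / (d + 2)) ∂μ)
             ^ (((d : ℝ) + 2) / d)) := by
  have hd₀ : (0 : ℝ) < d := by exact_mod_cast hd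
  have hr : (0 : ℝ) < 2 / d := by positivity
  have hexp : (d : ℝ) / (d + 2) = (1 + 2 / (d : ℝ))⁻¹ := by field_simp
  have hexp' : ((d : ℝ) + 2) / d = 1 + 2 / d := by field_simp
  have hpF : AEMeasurable (fun y => p y * F y) μ := (hp.mul hF).aemeasurable
  rw [hexp, hexp']
  refine ⟨?_, fun hI0 hIt hζeq => ?_⟩
  · gcongr
    exact lintegral_rpow_inv_one_add_rpow_le_lintegral_div_rpow hpF hζ.aemeasurable hζ1 hζpos hr
  · subst hζeq
    rw [lintegral_div_rpow_normalized_eq hpF hr.le hI0.ne' hIt.ne]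

/-- Vector case: for a probability density `p` on (a subset of) `ℝ^d`, a nonnegative
weight `F` and a point density `ζ` (probability density, positive a.e.),
`(1/2) ∫ p F / ζ^{2/d} ≥ (1/2) (∫ (p F)^{d/(d+2)})^{(d+2)/d}`, with equality for the
normalized point density `ζ = (p F)^{d/(d+2)} / ∫ (p F)^{d/(d+2)}` (when the
normalizing integral is finite and positive). -/
theorem optimal_point_density_vector
    {d : ℕ} (hd : 1 ≤ d)
    (μ : Measure (EuclideanSpace ℝ (Fin d)))
    (p F ζ : EuclideanSpace ℝ (Fin d) → ENNReal)
    (hp : Measurable p) (hF : Measurable F) (hζ : Measurable ζ)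
    (hp1 : ∫⁻ y, p y ∂μ = 1) (hζ1 : ∫⁻ y, ζ y ∂μ = 1)
    (hζpos : ∀ᵐ y ∂μ, 0 < ζ y) :
    (1 / 2 : ENNReal) * (∫⁻ y, (p y * F y) / (ζ y) ^ ((2 : ℝ) / d) ∂μ)
      ≥ (1 / 2) * (∫⁻ y, (p y * F y) ^ ((d : ℝ) / (d + 2)) ∂μ) ^ (((d : ℝ) + 2) / d)
    ∧ ((0 < ∫⁻ y, (p y * F y) ^ ((d : ℝ) / (d + 2)) ∂μ) →
       (∫⁻ y, (p y * F y) ^ ((d : ℝ) / (d + 2)) ∂μ < ⊤) →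
       (ζ = fun y => (p y * F y) ^ ((d : ℝ) / (d + 2))
              / ∫⁻ s, (p s * F s) ^ ((d : ℝ) / (d + 2)) ∂μ) →
       (1 / 2 : ENNReal) * (∫⁻ y, (p y * F y) / (ζ y) ^ ((2 : ℝ) / d) ∂μ)
         = (1 / 2) * (∫⁻ y, (p y * F y) ^ ((d : ℝ) / (d + 2)) ∂μ)
             ^ (((d : ℝ) + 2) / d)) :=
  optimal_point_density_vector_general hd μ p F ζ hp hF hζ hζ1 hζpos
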